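/- For every integer n ≥ 1 and all real numbers v_1, …, v_n, the kernel inequality v_n · Σ_{s=1}^{n} θ_{n−s} v_s ≥ (1/2)·ϑ_{n−1}·v_n² + (1/2)·Σ_{s=1}^{n} ϑ_{n−s}·v_s² − (1/2)·Σ_{s=1}^{n−1} ϑ_{n−s−1}·v_s² holds. -/
import Mathlib

/-- The sequence `θ_m`. -/
noncomputable def seqTheta (α : ℝ) : ℕ → ℝ
  | 0 => ((α + 1) / (2 * α)) ^ α
  | 1 => (α - 1) * (2 * α + 1) / (α + 1) * seqTheta α 0
  | (m + 2) =>
      2 * α / (((m : ℝ) + 2) * (1 + α)) *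
        (((((m : ℝ) + 2) - 1) / α - (1 - α) / (2 * α) * (2 * α + 1)) * seqTheta α (m + 1) +
          (1 - α) / (2 * α) * (3 - ((m : ℝ) + 2)) * seqTheta α m)

/-- The partial sums `ϑ_m = Σ_{s=0}^m θ_s`. -/
noncomputable def varTheta (α : ℝ) (m : ℕ) : ℝ := ∑ s ∈ Finset.range (m + 1), seqTheta α s

lemma theta0_pos {α : ℝ} (hα : α ∈ Set.Ioo (0:ℝ) 1) : 0 < seqTheta α 0 := by
  obtain ⟨h0, h1⟩ := hα
  have hb : (0:ℝ) < (α + 1) / (2 * α) := by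
    apply div_pos <;> linarith
  exact Real.rpow_pos_of_pos hb α

lemma theta2_eq {α : ℝ} (hα : α ∈ Set.Ioo (0:ℝ) 1) :
    (1+α)^2 * seqTheta α 2 = -2*α^3*(1-α) * seqTheta α 0 := by
  obtain ⟨h0, h1⟩ := hα
  have ha : α ≠ 0 := ne_of_gt h0
  have ha1 : (1:ℝ) + α ≠ 0 := by positivity
  have ha1' : α + 1 ≠ 0 := by positivity
  simp only [seqTheta]
  push_cast
  generalize ((α + 1) / (2 * α) : ℝ) ^ α = t0
  field_simp
  ring

lemma theta3_eq {α : ℝ} (hα : α ∈ Set.Ioo (0:ℝ) 1) :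
    3*(1+α)^3 * seqTheta α 3 = -2*α^3*(1-α)*(3 - α + 2*α^2) * seqTheta α 0 := by
  obtain ⟨h0, h1⟩ := hα
  have ha : α ≠ 0 := ne_of_gt h0
  have ha1 : (1:ℝ) + α ≠ 0 := by positivity
  have ha1' : α + 1 ≠ 0 := by positivity
  simp only [seqTheta]
  push_cast
  generalize ((α + 1) / (2 * α) : ℝ) ^ α = t0
  field_simp
  ring

lemma theta_rec {α : ℝ} (hα : α ∈ Set.Ioo (0:ℝ) 1) (k : ℕ) :
    ((k:ℝ)+4)*(1+α)*seqTheta α (k+4) =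
      (2*((k:ℝ)+3) - (1-α)*(2*α+1))*seqTheta α (k+3) + (1-α)*(-1-(k:ℝ))*seqTheta α (k+2) := by
  obtain ⟨h0, h1⟩ := hα
  have ha : α ≠ 0 := ne_of_gt h0
  have ha1 : (1:ℝ) + α ≠ 0 := by positivity
  have hk4 : ((k:ℝ)+4) ≠ 0 := by positivity
  have h : seqTheta α (k+4) = 2 * α / ((((k+2:ℕ) : ℝ) + 2) * (1 + α)) *
        ((((((k+2:ℕ) : ℝ) + 2) - 1) / α - (1 - α) / (2 * α) * (2 * α + 1)) * seqTheta α ((k+2) + 1) +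
          (1 - α) / (2 * α) * (3 - (((k+2:ℕ) : ℝ) + 2)) * seqTheta α (k+2)) := by
    show seqTheta α (k+2+2) = _
    rw [seqTheta]
  rw [h, show k+2+1 = k+3 from rfl]
  push_cast
  field_simp
  ring

lemma theta_aux {α : ℝ} (hα : α ∈ Set.Ioo (0:ℝ) 1) : ∀ k : ℕ,
    seqTheta α (k+3) ≤ 0 ∧
      ((k:ℝ)+3)*seqTheta α (k+3) ≤ ((k:ℝ)+1+α)*seqTheta α (k+2) := by
  obtain ⟨h0, h1⟩ := hα
  have hα' : α ∈ Set.Ioo (0:ℝ) 1 := ⟨h0, h1⟩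
  have ht0 := theta0_pos hα'
  have e2 := theta2_eq hα'
  have e3 := theta3_eq hα'
  have hc : 0 < α^3*(1-α)*seqTheta α 0 :=
    mul_pos (mul_pos (pow_pos h0 3) (by linarith)) ht0
  have h1a : (0:ℝ) < 1 + α := by linarith
  have hp3 : (0:ℝ) < (1+α)^3 := by positivity
  intro k
  induction k with
  | zero =>
    constructor
    · show seqTheta α 3 ≤ 0
      nlinarith [e3, hc, hp3, sq_nonneg α]
    · show (((0:ℕ):ℝ)+3) * seqTheta α 3 ≤ (((0:ℕ):ℝ)+1+α) * seqTheta α 2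
      have key : (1+α)^3*(3*seqTheta α 3) ≤ (1+α)^3*((1+α)*seqTheta α 2) := by
        nlinarith [e3, e2, hc, mul_nonneg hc.le (by nlinarith : (0:ℝ) ≤ 2 - 3*α + α^2)]
      have := le_of_mul_le_mul_left key hp3
      push_cast
      linarith
  | succ k ih =>
    obtain ⟨ih1, ih2⟩ := ih
    have E := theta_rec hα' k
    have E2 : ((k:ℝ)+1+α)*(((k:ℝ)+4)*(1+α)*seqTheta α (k+4)) =
        ((k:ℝ)+1+α)*((2*((k:ℝ)+3) - (1-α)*(2*α+1))*seqTheta α (k+3)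
          + (1-α)*(-1-(k:ℝ))*seqTheta α (k+2)) := by rw [E]
    have hk : (0:ℝ) ≤ (k:ℝ) := Nat.cast_nonneg k
    have hB : (1-α)*(-1-(k:ℝ)) ≤ 0 := by nlinarith
    have h5 : (1-α)*(-1-(k:ℝ)) * (((k:ℝ)+1+α)*seqTheta α (k+2)) ≤
        (1-α)*(-1-(k:ℝ)) * (((k:ℝ)+3)*seqTheta α (k+3)) :=
      mul_le_mul_of_nonpos_left ih2 hB
    have h6 : α*(1-α)*(2-α)*seqTheta α (k+3) ≤ 0 := by
      have := mul_nonneg (mul_nonneg (mul_nonneg h0.le (by linarith : (0:ℝ) ≤ 1-α)) (by linarith : (0:ℝ) ≤ 2-α)) (neg_nonneg.2 ih1)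
      linarith
    have hpos : (0:ℝ) < (1+α)*((k:ℝ)+1+α) := by nlinarith
    have key : ((1+α)*((k:ℝ)+1+α))*(((k:ℝ)+4)*seqTheta α (k+4)) ≤
        ((1+α)*((k:ℝ)+1+α))*(((k:ℝ)+2+α)*seqTheta α (k+3)) := by
      linarith only [E2, h5, h6]
    have goal2 : ((k:ℝ)+4)*seqTheta α (k+4) ≤ ((k:ℝ)+2+α)*seqTheta α (k+3) :=
      le_of_mul_le_mul_left key hpos
    have goal1 : seqTheta α (k+4) ≤ 0 := by
      have h7 : ((k:ℝ)+2+α)*seqTheta α (k+3) ≤ 0 := by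
        have := mul_nonneg (by linarith : (0:ℝ) ≤ (k:ℝ)+2+α) (neg_nonneg.2 ih1)
        linarith
      have hk4 : (0:ℝ) < (k:ℝ)+4 := by linarith
      nlinarith [goal2, h7, hk4]
    constructor
    · show seqTheta α (k+4) ≤ 0
      exact goal1
    · show (((k+1:ℕ):ℝ)+3) * seqTheta α (k+4) ≤ (((k+1:ℕ):ℝ)+1+α) * seqTheta α (k+3)
      push_cast
      linarith [goal2]

lemma theta_nonpos {α : ℝ} (hα : α ∈ Set.Ioo (0:ℝ) 1) :
    ∀ m : ℕ, 1 ≤ m → seqTheta α m ≤ 0 := by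
  obtain ⟨h0, h1⟩ := hα
  have hα' : α ∈ Set.Ioo (0:ℝ) 1 := ⟨h0, h1⟩
  have ht0 := theta0_pos hα'
  intro m hm
  match m, hm with
  | 1, _ =>
    rw [show seqTheta α 1 = (α - 1) * (2 * α + 1) / (α + 1) * seqTheta α 0 from by simp only [seqTheta]]
    have : (α - 1) * (2 * α + 1) / (α + 1) ≤ 0 := by
      apply div_nonpos_of_nonpos_of_nonneg <;> nlinarith
    exact mul_nonpos_iff.2 (Or.inr ⟨this, ht0.le⟩)
  | 2, _ =>
    have e2 := theta2_eq hα'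
    have hc : 0 < α^3*(1-α)*seqTheta α 0 :=
      mul_pos (mul_pos (pow_pos h0 3) (by linarith)) ht0
    have hp : (0:ℝ) < (1+α)^2 := by positivity
    nlinarith [e2, hc, hp]
  | (k+3), _ => exact (theta_aux hα' k).1

lemma varTheta_succ (α : ℝ) (k : ℕ) :
    varTheta α (k+1) = varTheta α k + seqTheta α (k+1) := Finset.sum_range_succ _ _

lemma Icc_sum (f : ℕ → ℝ) (m : ℕ) :
    ∑ s ∈ Finset.Icc 1 m, f s = ∑ i ∈ Finset.range m, f (i+1) := by
  rw [← Finset.Ico_add_one_right_eq_Icc, Finset.sum_Ico_eq_sum_range]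
  exact Finset.sum_congr (by norm_num) (fun i _ => by rw [Nat.add_comm])

lemma theta_reflect (α : ℝ) (m : ℕ) :
    ∑ i ∈ Finset.range (m+1), seqTheta α (m-i) = varTheta α m := by
  rw [varTheta]
  conv_rhs => rw [← Finset.sum_range_reflect]
  exact Finset.sum_congr rfl (fun i hi => by congr 1)

theorem kernel_inequality (α : ℝ) (hα : α ∈ Set.Ioo (0 : ℝ) 1) :
    ∀ n : ℕ, 1 ≤ n → ∀ v : ℕ → ℝ,
      1 / 2 * varTheta α (n - 1) * v n ^ 2 +
          1 / 2 * ∑ s ∈ Finset.Icc 1 n, varTheta α (n - s) * v s ^ 2 -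
          1 / 2 * ∑ s ∈ Finset.Icc 1 (n - 1), varTheta α (n - s - 1) * v s ^ 2 ≤
        v n * ∑ s ∈ Finset.Icc 1 n, seqTheta α (n - s) * v s := by
  intro n hn v
  obtain ⟨m, rfl⟩ : ∃ m, n = m + 1 := ⟨n - 1, by omega⟩
  simp only [Nat.add_sub_cancel]
  have h1 : ∑ s ∈ Finset.Icc 1 (m+1), seqTheta α (m+1-s) * v s
      = ∑ i ∈ Finset.range m, seqTheta α (m-i) * v (i+1) + seqTheta α 0 * v (m+1) := by
    rw [Icc_sum (fun s => seqTheta α (m+1-s) * v s), Finset.sum_range_succ]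
    congr 1
    · exact Finset.sum_congr rfl (fun i hi => by congr 2; omega)
    · norm_num
  have h2 : ∑ s ∈ Finset.Icc 1 (m+1), varTheta α (m+1-s) * v s ^ 2
      = ∑ i ∈ Finset.range m, varTheta α (m-i) * v (i+1) ^ 2 + varTheta α 0 * v (m+1) ^ 2 := by
    rw [Icc_sum (fun s => varTheta α (m+1-s) * v s ^ 2), Finset.sum_range_succ]
    congr 1
    · exact Finset.sum_congr rfl (fun i hi => by congr 2; omega)
    · norm_num
  have h3 : ∑ s ∈ Finset.Icc 1 m, varTheta α (m+1-s-1) * v s ^ 2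
      = ∑ i ∈ Finset.range m, varTheta α (m-i-1) * v (i+1) ^ 2 := by
    rw [Icc_sum (fun s => varTheta α (m+1-s-1) * v s ^ 2)]
    exact Finset.sum_congr rfl (fun i hi => by congr 2; omega)
  have htel : ∑ i ∈ Finset.range m, seqTheta α (m-i) = varTheta α m - seqTheta α 0 := by
    have h := theta_reflect α m
    rw [Finset.sum_range_succ] at h
    rw [Nat.sub_self] at h
    linarith
  have htel2 : v (m+1) ^ 2 * (∑ i ∈ Finset.range m, seqTheta α (m-i))
      = v (m+1) ^ 2 * (varTheta α m - seqTheta α 0) := by rw [htel]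
  have hv0 : varTheta α 0 * v (m+1) ^ 2 = seqTheta α 0 * v (m+1) ^ 2 := by simp [varTheta]
  have hsum : ∑ i ∈ Finset.range m,
      (v (m+1) * (seqTheta α (m-i) * v (i+1)) - 1/2 * (varTheta α (m-i) * v (i+1) ^ 2)
        + 1/2 * (varTheta α (m-i-1) * v (i+1) ^ 2) - (1/2 * v (m+1) ^ 2) * seqTheta α (m-i))
      = ∑ i ∈ Finset.range m, (-(1/2)) * (seqTheta α (m-i) * (v (m+1) - v (i+1)) ^ 2) := by
    refine Finset.sum_congr rfl (fun i hi => ?_)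
    have him : i < m := Finset.mem_range.1 hi
    obtain ⟨j, hj⟩ : ∃ j, m - i = j + 1 := ⟨m - i - 1, by omega⟩
    rw [hj]
    simp only [Nat.add_sub_cancel]
    rw [varTheta_succ]
    ring
  simp only [Finset.sum_add_distrib, Finset.sum_sub_distrib, ← Finset.mul_sum] at hsum
  have hD : ∑ i ∈ Finset.range m, seqTheta α (m-i) * (v (m+1) - v (i+1)) ^ 2 ≤ 0 := by
    refine Finset.sum_nonpos (fun i hi => ?_)
    have him : i < m := Finset.mem_range.1 hi
    have hθ : seqTheta α (m-i) ≤ 0 := theta_nonpos hα (m-i) (by omega)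
    have := mul_nonneg (neg_nonneg.2 hθ) (sq_nonneg (v (m+1) - v (i+1)))
    nlinarith [this]
  rw [h1, h2, h3]
  linarith [hsum, htel2, hD, hv0]
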